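/- Let (G, F) be an inverse sequence of twinned graph homomorphisms, with inverse limit vertex set V_G and relations E_G, E_F. With C̄(x, j), C̄(A, j), and C̄(x, j, i) defined as in the construction (C(v, j) = {y ∈ V_G : y_j = v}; C̄(x, j) = ∪{C(v, j) : (v, x_j) ∈ E(F_j)}; C̄(A, j) = ∪_{a∈A} C̄(a, j); C̄(x, j, j) = C̄(x, j), C̄(x, j, i) = C̄(C̄(x, j, i−1), i) for i > j; and C̄(A, j, i) = ∪_{a∈A} C̄(a, j, i)), for every x ∈ V_G, every k ∈ ℕ, and every i ≥ k + 1, the image of C̄(x, k+1, i) under E_G is contained in C̄(E_G x, k, i−1), where E_G x = {y : (x, y) ∈ E_G} and the image of a set A under E_G is ∪_{a∈A} E_G a (with the convention C̄(A, k, k−1) interpreted as C̄(A, k) when i−1 = k). -/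

import Mathlib

/-- An inverse sequence of twinned graph homomorphisms `(𝒢, ℱ)`: graphs
`G_i = (V i, EG i)` and `F_i = (V i, EF i)` on the same finite vertex sets, sharing
connecting maps `φ i : V (i+1) → V i`, satisfying conditions (DS0)–(DS3b). -/
structure TwinnedSeq : Type 1 where
  V : ℕ → Type
  fintype : ∀ i, Fintype (V i)
  EG : ∀ i, V i → V i → Prop
  EF : ∀ i, V i → V i → Prop
  φ : ∀ i, V (i + 1) → V i
  /-- (DS0) `G_0` has exactly one vertex. -/
  ds0_nonempty : Nonempty (V 0)
  ds0_subsingleton : ∀ v w : V 0, v = w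
  /-- (DS1) each `φ i` is an edge-surjective graph homomorphism for `𝒢`, and every
  vertex of every `G_i` has an outgoing edge. -/
  ds1_hom : ∀ i, ∀ u v : V (i + 1), EG (i + 1) u v → EG i (φ i u) (φ i v)
  ds1_edge_surj : ∀ i, ∀ u v : V i, EG i u v →
    ∃ a b : V (i + 1), EG (i + 1) a b ∧ φ i a = u ∧ φ i b = v
  ds1_out : ∀ i, ∀ v : V i, ∃ w, EG i v w
  /-- (DS2) each `φ i` is a graph homomorphism for `ℱ`, each `EF i` is symmetric and
  reflexive. -/
  ds2_hom : ∀ i, ∀ u v : V (i + 1), EF (i + 1) u v → EF i (φ i u) (φ i v)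
  ds2_symm : ∀ i, ∀ u v : V i, EF i u v → EF i v u
  ds2_refl : ∀ i, ∀ v : V i, EF i v v
  /-- (DS3) -/
  ds3 : ∀ i, ∀ a b a' b' : V (i + 1),
    EF (i + 1) a b → EG (i + 1) a a' → EG (i + 1) b b' → EF i (φ i a') (φ i b')
  /-- (DS3b) -/
  ds3b : ∀ i, ∀ a b c : V (i + 1), EF (i + 1) a b → EF (i + 1) b c → EF i (φ i a) (φ i c)

/-- The inverse limit vertex set `V_G`. -/
def TwLimit (S : TwinnedSeq) : Type :=
  {x : ∀ i, S.V i // ∀ i, x i = S.φ i (x (i + 1))}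

/-- `V_G` as a subspace of the product of the discrete (finite) spaces `V i`. -/
instance (S : TwinnedSeq) : TopologicalSpace (TwLimit S) :=
  letI : ∀ i, TopologicalSpace (S.V i) := fun _ => ⊥
  inferInstanceAs (TopologicalSpace {x : ∀ i, S.V i // ∀ i, x i = S.φ i (x (i + 1))})

/-- The inverse limit relation `E_G`. -/
def limEG (S : TwinnedSeq) (x y : TwLimit S) : Prop :=
  ∀ i, S.EG i (x.1 i) (y.1 i)

/-- The inverse limit relation `E_F`. -/
def limEF (S : TwinnedSeq) (x y : TwLimit S) : Prop :=
  ∀ i, S.EF i (x.1 i) (y.1 i)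

/-- `C̄(A, j) = ∪_{a ∈ A} C̄(a, j)`, where
`C̄(x, j) = ∪ {C(v, j) : (v, x_j) ∈ E(F_j)} = {y ∈ V_G : (y_j, x_j) ∈ E(F_j)}`
(and `C(v, j) = {y ∈ V_G : y_j = v}` is a cylinder). -/
def Cbar (S : TwinnedSeq) (A : Set (TwLimit S)) (j : ℕ) : Set (TwLimit S) :=
  {y | ∃ a ∈ A, S.EF j (y.1 j) (a.1 j)}

/-- The iterated set `C̄(A, j, i)` for `i = j + n`: `C̄(A, j, j) = C̄(A, j)` and
`C̄(A, j, i) = C̄(C̄(A, j, i − 1), i)` for `i > j`. -/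
def CbarIter (S : TwinnedSeq) (A : Set (TwLimit S)) (j : ℕ) : ℕ → Set (TwLimit S)
  | 0 => Cbar S A j
  | n + 1 => Cbar S (CbarIter S A j n) (j + n + 1)

/-- `C̃(x, j) = ∪_{i ≥ j} C̄(x, j, i)`. -/
def Ctilde (S : TwinnedSeq) (x : TwLimit S) (j : ℕ) : Set (TwLimit S) :=
  ⋃ n, CbarIter S {x} j n

/-- The image of `A ⊆ V_G` under the relation `E_G`: `∪_{a ∈ A} E_G a`. -/
def EGImage (S : TwinnedSeq) (A : Set (TwLimit S)) : Set (TwLimit S) :=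
  {y | ∃ a ∈ A, limEG S a y}

/-!
Every point of `V_G` has an `E_G`-successor: the successors at each level form an
inverse system of finite nonempty sets (by DS1), which has a thread. Given `y` with
`(a, y) ∈ E_G` and `a ∈ C̄(A, j + 1)` witnessed by `c ∈ A`, choose such a successor `b`
of `c`; then DS3 at level `j + 1` gives `(y_j, b_j) ∈ E(F_j)`, so `y ∈ C̄(E_G A, j)`.
Iterating this one-step inclusion along `C̄(·, k + 1, i)` proves the theorem.
-/

open CategoryTheory in
theorem exists_forall_eq_of_finite_of_nonempty (A : ℕ → Type) [∀ i, Finite (A i)]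
    [∀ i, Nonempty (A i)] (f : ∀ i, A (i + 1) → A i) :
    ∃ x : ∀ i, A i, ∀ i, x i = f i (x (i + 1)) := by
  let F := Functor.ofOpSequence fun i => TypeCat.ofHom (f i)
  have : ∀ j : ℕᵒᵖ, Finite (F.obj j) := fun j => inferInstanceAs (Finite (A j.unop))
  have : ∀ j : ℕᵒᵖ, Nonempty (F.obj j) := fun j => inferInstanceAs (Nonempty (A j.unop))
  obtain ⟨s, hs⟩ := nonempty_sections_of_finite_inverse_system F
  refine ⟨fun i => s ⟨i⟩, fun i => ?_⟩
  have h := hs (homOfLE (Nat.le_add_right i 1)).op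
  rw [Functor.ofOpSequence_map_homOfLE_succ] at h
  exact h.symm

namespace TwinnedSeq

variable (S : TwinnedSeq)

theorem exists_limEG (x : TwLimit S) : ∃ y, limEG S x y := by
  have : ∀ i, Finite (S.V i) := fun i => @Finite.of_fintype _ (S.fintype i)
  have : ∀ i, Nonempty {w : S.V i // S.EG i (x.1 i) w} := fun i =>
    let ⟨w, hw⟩ := S.ds1_out i (x.1 i)
    ⟨⟨w, hw⟩⟩
  obtain ⟨t, ht⟩ := exists_forall_eq_of_finite_of_nonempty
    (fun i => {w : S.V i // S.EG i (x.1 i) w})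
    (fun i w => ⟨S.φ i w.1, x.2 i ▸ S.ds1_hom i _ _ w.2⟩)
  exact ⟨⟨fun i => (t i).1, fun i => congrArg Subtype.val (ht i)⟩, fun i => (t i).2⟩

theorem Cbar_mono {A B : Set (TwLimit S)} (h : A ⊆ B) (j : ℕ) : Cbar S A j ⊆ Cbar S B j :=
  fun _ ⟨a, ha, hya⟩ => ⟨a, h ha, hya⟩

theorem EGImage_Cbar_succ_subset (A : Set (TwLimit S)) (j : ℕ) :
    EGImage S (Cbar S A (j + 1)) ⊆ Cbar S (EGImage S A) j := by
  rintro y ⟨a, ⟨c, hc, hac⟩, hay⟩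
  obtain ⟨b, hcb⟩ := S.exists_limEG c
  refine ⟨b, ⟨c, hc, hcb⟩, ?_⟩
  rw [y.2 j, b.2 j]
  exact S.ds3 j _ _ _ _ hac (hay (j + 1)) (hcb (j + 1))

theorem EGImage_CbarIter_succ_subset (A : Set (TwLimit S)) (k n : ℕ) :
    EGImage S (CbarIter S A (k + 1) n) ⊆ CbarIter S (EGImage S A) k n := by
  induction n with
  | zero => exact S.EGImage_Cbar_succ_subset A k
  | succ n ih =>
    rw [CbarIter, Nat.add_right_comm k 1 n]
    calc EGImage S (Cbar S (CbarIter S A (k + 1) n) (k + n + 1 + 1))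
        ⊆ Cbar S (EGImage S (CbarIter S A (k + 1) n)) (k + n + 1) :=
          S.EGImage_Cbar_succ_subset _ _
      _ ⊆ Cbar S (CbarIter S (EGImage S A) k n) (k + n + 1) := S.Cbar_mono ih _

end TwinnedSeq

theorem EG_image_CbarIter_general (S : TwinnedSeq) (x : TwLimit S) (k i : ℕ) :
    EGImage S (CbarIter S {x} (k + 1) (i - (k + 1))) ⊆
      CbarIter S (EGImage S {x}) k (i - (k + 1)) :=
  S.EGImage_CbarIter_succ_subset {x} k (i - (k + 1))

/-- For every `x ∈ V_G`, `k ∈ ℕ` and `i ≥ k + 1`, the image of `C̄(x, k+1, i)`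
under `E_G` is contained in `C̄(E_G x, k, i − 1)` (note `i - (k+1) = (i-1) - k`,
with the convention that `C̄(A, k, k)` is `C̄(A, k)`). -/
theorem EG_image_CbarIter (S : TwinnedSeq) (x : TwLimit S) (k i : ℕ)
    (hi : k + 1 ≤ i) :
    EGImage S (CbarIter S {x} (k + 1) (i - (k + 1))) ⊆
      CbarIter S (EGImage S {x}) k (i - (k + 1)) :=
  EG_image_CbarIter_general S x k i
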